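/- arXiv:2209.09293 — 3 statements merged into one kernel-verified Lean document; each statement's English description precedes it below -/
import Mathlib

section
/- Let X be a countably infinite set and let E be a contraction (E(Z) ⊆ Z for every finite Z ⊆ X). If the lexicographic composition L_E preserves path independence over the class C^res of responsive choice functions, then the set function I\E, defined by (I\E)(Z) = Z \ E(Z), is monotonic: Z ⊆ Z' implies Z \ E(Z) ⊆ Z' \ E(Z') for all finite Z, Z' ⊆ X. -/
/-! Common definitions: choice functions on a countably infinite set of items,
lexicographic composition subject to an exclusion function, and the various
properties from the paper. Items form a type `X`; finite subsets of `X` are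
`Finset X`; set functions are maps `Finset X → Set X`. -/

open scoped Classical

variable {X : Type*}

/-- A choice function selects a subset of its input. -/
def IsChoice (C : Finset X → Finset X) : Prop := ∀ Y, C Y ⊆ Y

/-- Lexicographic composition of `C1` and `C2` subject to the exclusion
function `E`:  `Y ↦ C1(Y) ∪ C2(Y \ E(C1(Y)))`. -/
noncomputable def lexComp (E : Finset X → Set X) (C1 C2 : Finset X → Finset X) :
    Finset X → Finset X :=
  fun Y => C1 Y ∪ C2 (Y.filter (fun y => y ∉ E (C1 Y)))

/-- Path independence: `C(Y ∪ Y') = C(C(Y) ∪ C(Y'))`. -/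
def PathIndependent (C : Finset X → Finset X) : Prop :=
  ∀ Y Y' : Finset X, C (Y ∪ Y') = C (C Y ∪ C Y')

/-- Substitutes: the rejection function is monotone. -/
def Substitutes (C : Finset X → Finset X) : Prop :=
  ∀ Y Y' : Finset X, Y ⊆ Y' → Y \ C Y ⊆ Y' \ C Y'

/-- Size monotonicity (law of aggregate demand). -/
def SizeMonotonic (C : Finset X → Finset X) : Prop :=
  ∀ Y Y' : Finset X, Y ⊆ Y' → (C Y).card ≤ (C Y').card

/-- Consistency: `C(Y') ⊆ Y ⊆ Y'` implies `C(Y) = C(Y')`. -/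
def Consistent (C : Finset X → Finset X) : Prop :=
  ∀ Y Y' : Finset X, C Y' ⊆ Y → Y ⊆ Y' → C Y = C Y'

/-- The `q` highest-ranked acceptable elements of `Y`, with respect to a linear
order `r` on `X ∪ {∅}` (modelled as `Option X`, `none` playing the role of the
outside option `∅`): `y` is chosen iff `y ≻ ∅` and fewer than `q` acceptable
elements of `Y` are ranked strictly above `y`. -/
noncomputable def topChoice (r : LinearOrder (Option X)) (q : ℕ) (Y : Finset X) : Finset X :=
  Y.filter (fun y => r.lt none (some y) ∧
    (Y.filter (fun z => r.lt none (some z) ∧ r.lt (some y) (some z))).card < q)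

/-- `C` is responsive to the linear order `r` on `X ∪ {∅}` and quota `q`. -/
def ResponsiveWith (r : LinearOrder (Option X)) (q : ℕ) (C : Finset X → Finset X) : Prop :=
  ∀ Y : Finset X, C Y = topChoice r q Y

/-- Responsive choice functions (the class `C^res`). -/
def Responsive (C : Finset X → Finset X) : Prop :=
  ∃ (r : LinearOrder (Option X)) (q : ℕ), ResponsiveWith r q C

/-- Single-valued responsive choice functions (the class `C^{sv-res}`): quota 1. -/
def SVResponsive (C : Finset X → Finset X) : Prop :=
  ∃ r : LinearOrder (Option X), ResponsiveWith r 1 C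

/-- `E` is threshold-linear with cardinal reuse with respect to the parameters
`t ∈ ℕ ∪ {0,∞}`, `K ⊆ X` and the chain `∅ = T^0 ⊆ T^1 ⊆ ⋯ ⊆ T^t ⊆ X \ K`:
for every finite `Z`, if `|Z| < t` then `E(Z) = (Z \ T^{|Z|}) ∪ K`, and
otherwise `G_E(Z) = E(Z) ∪ Z = X`. -/
def TLCRWith (E : Finset X → Set X) (t : ℕ∞) (K : Set X) (T : ℕ → Set X) : Prop :=
  T 0 = ∅ ∧ (∀ n : ℕ, (n : ℕ∞) < t → T n ⊆ T (n + 1)) ∧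
  (∀ n : ℕ, (n : ℕ∞) ≤ t → T n ⊆ Kᶜ) ∧
  ∀ Z : Finset X,
    ((Z.card : ℕ∞) < t → E Z = ((Z : Set X) \ T Z.card) ∪ K) ∧
    (¬ (Z.card : ℕ∞) < t → E Z ∪ (Z : Set X) = Set.univ)

/-- `E` is threshold-linear with cardinal reuse (for some parameters). -/
def TLCR (E : Finset X → Set X) : Prop :=
  ∃ (t : ℕ∞) (K : Set X) (T : ℕ → Set X), TLCRWith E t K T

/-- A dilation `D` is threshold-linear (with threshold `t`), where `K = D(∅)`:
`D(Z) = Z ∪ K` when `|Z| < t`, and `D(Z) = X` otherwise. -/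
def ThresholdLinear (D : Finset X → Set X) : Prop :=
  ∃ t : ℕ∞, ∀ Z : Finset X,
    ((Z.card : ℕ∞) < t → D Z = (Z : Set X) ∪ D ∅) ∧
    (¬ (Z.card : ℕ∞) < t → D Z = Set.univ)

/-- A set function `F` (valued inside its argument) is cardinal-linear:
there is a weakly increasing sequence `∅ = T^0 ⊆ T^1 ⊆ ⋯` with
`F(Z) = Z ∩ T^{|Z|}` for every finite `Z`. -/
def CardinalLinear (F : Finset X → Set X) : Prop :=
  ∃ T : ℕ → Set X, T 0 = ∅ ∧ Monotone T ∧
    ∀ Z : Finset X, F Z = (Z : Set X) ∩ T Z.card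

section Equiv

variable (s : Setoid X)

/-- A finite set is feasible if it contains at most one element of each
equivalence class. -/
def Feasible (Z : Finset X) : Prop :=
  ∀ x ∈ Z, ∀ z ∈ Z, x ≠ z → ¬ s.r x z

/-- A choice function is many-to-one if it always selects a feasible set. -/
def ManyToOne (C : Finset X → Finset X) : Prop :=
  ∀ Y : Finset X, Feasible s (C Y)

/-- `I_Z`: the union of the equivalence classes of the members of `Z`. -/
def IClass (Z : Finset X) : Set X := {y | ∃ x ∈ Z, s.r y x}

/-- `E` is equivalence-excluding: `Z ∪ E(Z) ⊇ I_Z` for every feasible `Z`. -/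
def EquivExcluding (E : Finset X → Set X) : Prop :=
  ∀ Z : Finset X, Feasible s Z → IClass s Z ⊆ (Z : Set X) ∪ E Z

/-- `Cbar` completes `C`: whenever `Cbar(Y)` is feasible, `Cbar(Y) = C(Y)`. -/
def Completes (Cbar C : Finset X → Finset X) : Prop :=
  ∀ Y : Finset X, Feasible s (Cbar Y) → Cbar Y = C Y

/-- `E` is many-to-one threshold-linear with cardinal reuse with the parameters
`t`, `K`, `{T^n}`: the displayed condition holds for every *feasible* `Z`:
if `Z ∪ K ≠ X` and `|Z| < t` then `E(Z) = (Z \ T^{|Z|}) ∪ K`, and otherwise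
`G_E(Z) = X`. -/
def MtoTLCRWith (E : Finset X → Set X) (t : ℕ∞) (K : Set X) (T : ℕ → Set X) : Prop :=
  T 0 = ∅ ∧ (∀ n : ℕ, (n : ℕ∞) < t → T n ⊆ T (n + 1)) ∧
  (∀ n : ℕ, (n : ℕ∞) ≤ t → T n ⊆ Kᶜ) ∧
  ∀ Z : Finset X, Feasible s Z →
    (((Z : Set X) ∪ K ≠ Set.univ ∧ (Z.card : ℕ∞) < t) →
      E Z = ((Z : Set X) \ T Z.card) ∪ K) ∧
    (¬ ((Z : Set X) ∪ K ≠ Set.univ ∧ (Z.card : ℕ∞) < t) →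
      E Z ∪ (Z : Set X) = Set.univ)

end Equiv

/-! ### Auxiliary constructions for the proof -/

/-- Key function ranking all of `S` above the outside option and everything
else below it. -/
noncomputable def pmKey1 {X : Type*} (enc : X → ℕ) (S : Finset X) : Option X → ℤ
  | none => 0
  | some y => if y ∈ S then (enc y : ℤ) + 1 else -(enc y : ℤ) - 1

lemma pmKey1_inj {X : Type*} {enc : X → ℕ} (henc : Function.Injective enc)
    (S : Finset X) : Function.Injective (pmKey1 enc S) := by
  intro a b h
  cases a with
  | none =>
    cases b with
    | none => rfl
    | some z => simp only [pmKey1] at h; split_ifs at h <;> omega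
  | some y =>
    cases b with
    | none => simp only [pmKey1] at h; split_ifs at h <;> omega
    | some z =>
      simp only [pmKey1] at h
      split_ifs at h <;>
        first
          | exact congrArg some (henc (by omega))
          | omega

lemma pmKey1_pos {X : Type*} (enc : X → ℕ) (S : Finset X) (y : X) :
    (0 : ℤ) < pmKey1 enc S (some y) ↔ y ∈ S := by
  show (0 : ℤ) < (if y ∈ S then (enc y : ℤ) + 1 else -(enc y : ℤ) - 1) ↔ y ∈ S
  split_ifs with h
  · exact ⟨fun _ => h, fun _ => by omega⟩
  · exact ⟨fun h' => absurd h' (by omega), fun hmem => absurd hmem h⟩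

/-- With the order induced by `pmKey1 enc S` and quota `S.card`, the top choice
is exactly intersection with `S`. -/
lemma topChoice_pmKey1 {X : Type*} {enc : X → ℕ} (henc : Function.Injective enc)
    (S : Finset X) (Y : Finset X) :
    topChoice (LinearOrder.lift' (pmKey1 enc S) (pmKey1_inj henc S)) S.card Y = Y ∩ S := by
  classical
  set r : LinearOrder (Option X) := LinearOrder.lift' (pmKey1 enc S) (pmKey1_inj henc S) with hr
  ext y
  simp only [topChoice, Finset.mem_filter, Finset.mem_inter]
  constructor
  · rintro ⟨hyY, hacc, -⟩
    have hacc' : (0 : ℤ) < pmKey1 enc S (some y) := hacc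
    exact ⟨hyY, (pmKey1_pos enc S y).1 hacc'⟩
  · rintro ⟨hyY, hyS⟩
    refine ⟨hyY, ?_, ?_⟩
    · show (0 : ℤ) < pmKey1 enc S (some y)
      exact (pmKey1_pos enc S y).2 hyS
    · have hsub : (Y.filter (fun z => r.lt none (some z) ∧ r.lt (some y) (some z))) ⊆
          (Y ∩ S).erase y := by
        intro z hz
        rw [Finset.mem_filter] at hz
        obtain ⟨hzY, h1, h2⟩ := hz
        have h1' : (0 : ℤ) < pmKey1 enc S (some z) := h1
        have h2' : pmKey1 enc S (some y) < pmKey1 enc S (some z) := h2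
        have hzS : z ∈ S := (pmKey1_pos enc S z).1 h1'
        have hzy : z ≠ y := by
          intro h; subst h; exact lt_irrefl _ h2'
        exact Finset.mem_erase.2 ⟨hzy, Finset.mem_inter.2 ⟨hzY, hzS⟩⟩
      calc (Y.filter (fun z => r.lt none (some z) ∧ r.lt (some y) (some z))).card
          ≤ ((Y ∩ S).erase y).card := Finset.card_le_card hsub
        _ < (Y ∩ S).card := Finset.card_erase_lt_of_mem (Finset.mem_inter.2 ⟨hyY, hyS⟩)
        _ ≤ S.card := Finset.card_le_card Finset.inter_subset_right

/-- Key function ranking `x` first, `w` second, the outside option third. -/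
noncomputable def pmKey2 {X : Type*} (enc : X → ℕ) (x w : X) : Option X → ℤ
  | none => 0
  | some y => if y = x then 2 else if y = w then 1 else -(enc y : ℤ) - 1

lemma pmKey2_inj {X : Type*} {enc : X → ℕ} (henc : Function.Injective enc)
    {x w : X} (hxw : x ≠ w) : Function.Injective (pmKey2 enc x w) := by
  intro a b h
  cases a with
  | none =>
    cases b with
    | none => rfl
    | some z => simp only [pmKey2] at h; split_ifs at h <;> omega
  | some y =>
    cases b with
    | none => simp only [pmKey2] at h; split_ifs at h <;> omega
    | some z =>
      simp only [pmKey2] at h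
      split_ifs at h <;>
        first
          | (subst_vars; rfl)
          | omega
          | exact congrArg some (henc (by omega))

lemma pmKey2_atx {X : Type*} (enc : X → ℕ) (x w : X) : pmKey2 enc x w (some x) = 2 := by
  show (if x = x then (2 : ℤ) else if x = w then 1 else -(enc x : ℤ) - 1) = 2
  rw [if_pos rfl]

lemma pmKey2_atw {X : Type*} (enc : X → ℕ) {x w : X} (hxw : x ≠ w) :
    pmKey2 enc x w (some w) = 1 := by
  show (if w = x then (2 : ℤ) else if w = w then 1 else -(enc w : ℤ) - 1) = 1
  rw [if_neg (fun h => hxw h.symm), if_pos rfl]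

lemma pmKey2_le_two {X : Type*} (enc : X → ℕ) (x w y : X) :
    pmKey2 enc x w (some y) ≤ 2 := by
  show (if y = x then (2 : ℤ) else if y = w then 1 else -(enc y : ℤ) - 1) ≤ 2
  split_ifs <;> omega

lemma pmKey2_le_one {X : Type*} (enc : X → ℕ) {x w y : X} (h1 : y ≠ x) :
    pmKey2 enc x w (some y) ≤ 1 := by
  show (if y = x then (2 : ℤ) else if y = w then 1 else -(enc y : ℤ) - 1) ≤ 1
  rw [if_neg h1]
  split_ifs <;> omega

lemma pmKey2_pos {X : Type*} (enc : X → ℕ) (x w y : X) :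
    (0 : ℤ) < pmKey2 enc x w (some y) ↔ (y = x ∨ y = w) := by
  show (0 : ℤ) < (if y = x then (2 : ℤ) else if y = w then 1 else -(enc y : ℤ) - 1) ↔ _
  split_ifs with h1 h2
  · exact ⟨fun _ => Or.inl h1, fun _ => by norm_num⟩
  · exact ⟨fun _ => Or.inr h2, fun _ => by norm_num⟩
  · exact ⟨fun h' => absurd h' (by omega), fun hor => (hor.elim h1 h2).elim⟩

/-- With the order induced by `pmKey2 enc x w` and quota `1`: if `x` is
available, exactly `x` is chosen. -/
lemma topChoice_pmKey2_x {X : Type*} {enc : X → ℕ} (henc : Function.Injective enc)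
    {x w : X} (hxw : x ≠ w) {W : Finset X} (hxW : x ∈ W) :
    topChoice (LinearOrder.lift' (pmKey2 enc x w) (pmKey2_inj henc hxw)) 1 W = {x} := by
  classical
  set r : LinearOrder (Option X) := LinearOrder.lift' (pmKey2 enc x w) (pmKey2_inj henc hxw)
    with hr
  ext y
  simp only [topChoice, Finset.mem_filter, Finset.mem_singleton]
  constructor
  · rintro ⟨hyW, hacc, hcard⟩
    by_contra hyx
    have hxF : x ∈ W.filter (fun z => r.lt none (some z) ∧ r.lt (some y) (some z)) := by
      refine Finset.mem_filter.2 ⟨hxW, ?_, ?_⟩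
      · show (0 : ℤ) < pmKey2 enc x w (some x)
        rw [pmKey2_atx]; norm_num
      · show pmKey2 enc x w (some y) < pmKey2 enc x w (some x)
        rw [pmKey2_atx]
        have := pmKey2_le_one enc (x := x) (w := w) hyx
        omega
    have := Finset.card_pos.2 ⟨x, hxF⟩
    omega
  · intro h
    refine ⟨h ▸ hxW, ?_, ?_⟩
    · show (0 : ℤ) < pmKey2 enc x w (some y)
      rw [h, pmKey2_atx]; norm_num
    · have hempty : W.filter (fun z => r.lt none (some z) ∧ r.lt (some y) (some z)) = ∅ := by
        refine Finset.eq_empty_of_forall_notMem (fun z hz => ?_)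
        rw [Finset.mem_filter] at hz
        have h2 : pmKey2 enc x w (some y) < pmKey2 enc x w (some z) := hz.2.2
        rw [h, pmKey2_atx] at h2
        exact absurd h2 (not_lt.2 (pmKey2_le_two enc x w z))
      rw [hempty]
      simp

/-- If `x` is unavailable but `w` is, exactly `w` is chosen. -/
lemma topChoice_pmKey2_w {X : Type*} {enc : X → ℕ} (henc : Function.Injective enc)
    {x w : X} (hxw : x ≠ w) {W : Finset X} (hxW : x ∉ W) (hwW : w ∈ W) :
    topChoice (LinearOrder.lift' (pmKey2 enc x w) (pmKey2_inj henc hxw)) 1 W = {w} := by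
  classical
  set r : LinearOrder (Option X) := LinearOrder.lift' (pmKey2 enc x w) (pmKey2_inj henc hxw)
    with hr
  ext y
  simp only [topChoice, Finset.mem_filter, Finset.mem_singleton]
  constructor
  · rintro ⟨hyW, hacc, -⟩
    have hacc' : (0 : ℤ) < pmKey2 enc x w (some y) := hacc
    rcases (pmKey2_pos enc x w y).1 hacc' with h | h
    · exact absurd (h ▸ hyW) hxW
    · exact h
  · intro h
    refine ⟨h ▸ hwW, ?_, ?_⟩
    · show (0 : ℤ) < pmKey2 enc x w (some y)
      rw [h, pmKey2_atw enc hxw]; norm_num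
    · have hempty : W.filter (fun z => r.lt none (some z) ∧ r.lt (some y) (some z)) = ∅ := by
        refine Finset.eq_empty_of_forall_notMem (fun z hz => ?_)
        rw [Finset.mem_filter] at hz
        obtain ⟨hzW, h1, h2⟩ := hz
        have h1' : (0 : ℤ) < pmKey2 enc x w (some z) := h1
        have h2' : pmKey2 enc x w (some y) < pmKey2 enc x w (some z) := h2
        rw [h, pmKey2_atw enc hxw] at h2'
        rcases (pmKey2_pos enc x w z).1 h1' with hz' | hz'
        · exact hxW (hz' ▸ hzW)
        · rw [hz', pmKey2_atw enc hxw] at h2'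
          exact lt_irrefl _ h2'
      rw [hempty]
      simp

/-- If neither `x` nor `w` is available, nothing is chosen. -/
lemma topChoice_pmKey2_none {X : Type*} {enc : X → ℕ} (henc : Function.Injective enc)
    {x w : X} (hxw : x ≠ w) {W : Finset X} (hxW : x ∉ W) (hwW : w ∉ W) :
    topChoice (LinearOrder.lift' (pmKey2 enc x w) (pmKey2_inj henc hxw)) 1 W = ∅ := by
  classical
  refine Finset.eq_empty_of_forall_notMem (fun y hy => ?_)
  rw [topChoice, Finset.mem_filter] at hy
  have hacc' : (0 : ℤ) < pmKey2 enc x w (some y) := hy.2.1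
  rcases (pmKey2_pos enc x w y).1 hacc' with h | h
  · exact hxW (h ▸ hy.1)
  · exact hwW (h ▸ hy.1)

lemma topChoice_isChoice {X : Type*} (r : LinearOrder (Option X)) (q : ℕ) :
    IsChoice (topChoice r q) := fun Y => Finset.filter_subset _ Y

/-- **Claim (reuse is monotonic).** If `E` is a contraction and `L_E` preserves
path independence over responsive choice functions, then `I \ E` is monotonic:
`Z ⊆ Z'` implies `Z \ E(Z) ⊆ Z' \ E(Z')`. -/
theorem contraction_preserving_pi_reuse_monotonic
    {X : Type*} [Countable X] [Infinite X] (E : Finset X → Set X)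
    (hcontr : ∀ Z : Finset X, E Z ⊆ (Z : Set X))
    (hpres : ∀ C1 C2 : Finset X → Finset X, IsChoice C1 → IsChoice C2 →
      Responsive C1 → Responsive C2 → PathIndependent (lexComp E C1 C2)) :
    ∀ Z Z' : Finset X, Z ⊆ Z' →
      (Z : Set X) \ E Z ⊆ (Z' : Set X) \ E Z' := by
  classical
  intro Z Z' hZZ' x hx
  obtain ⟨hxZc, hxE⟩ := hx
  have hxZ : x ∈ Z := hxZc
  have hxZ' : x ∈ Z' := hZZ' hxZ
  refine ⟨hxZ', ?_⟩
  intro hxE'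
  obtain ⟨w, hw⟩ := Infinite.exists_notMem_finset Z'
  obtain ⟨enc, henc⟩ := Countable.exists_injective_nat X
  have hxw : x ≠ w := fun h => hw (h ▸ hxZ')
  set r1 : LinearOrder (Option X) := LinearOrder.lift' (pmKey1 enc Z') (pmKey1_inj henc Z')
    with hr1
  set r2 : LinearOrder (Option X) := LinearOrder.lift' (pmKey2 enc x w) (pmKey2_inj henc hxw)
    with hr2
  set C1 : Finset X → Finset X := topChoice r1 Z'.card with hC1def
  set C2 : Finset X → Finset X := topChoice r2 1 with hC2def
  have hC1 : ∀ Y, C1 Y = Y ∩ Z' := fun Y => topChoice_pmKey1 henc Z' Y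
  have hpi : PathIndependent (lexComp E C1 C2) :=
    hpres C1 C2 (topChoice_isChoice r1 Z'.card) (topChoice_isChoice r2 1)
      ⟨r1, Z'.card, fun Y => rfl⟩ ⟨r2, 1, fun Y => rfl⟩
  set L := lexComp E C1 C2 with hL
  -- L (insert w Z) = Z
  have hC1A : C1 (insert w Z) = Z := by
    rw [hC1, Finset.insert_inter_of_notMem hw, Finset.inter_eq_left.2 hZZ']
  have hLA : L (insert w Z) = Z := by
    rw [hL]
    show C1 (insert w Z) ∪ C2 ((insert w Z).filter (fun y => y ∉ E (C1 (insert w Z)))) = Z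
    rw [hC1A]
    have hxW : x ∈ (insert w Z).filter (fun y => y ∉ E Z) :=
      Finset.mem_filter.2 ⟨Finset.mem_insert_of_mem hxZ, hxE⟩
    rw [hC2def, topChoice_pmKey2_x henc hxw hxW]
    exact Finset.union_eq_left.2 (Finset.singleton_subset_iff.2 hxZ)
  -- L Z' = Z'
  have hC1Z' : C1 Z' = Z' := by rw [hC1, Finset.inter_self]
  have hxnot : ∀ (V : Finset X), x ∉ V.filter (fun y => y ∉ E Z') := by
    intro V hmem
    exact (Finset.mem_filter.1 hmem).2 hxE'
  have hwnotEZ' : w ∉ E Z' := fun h => hw (hcontr Z' h)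
  have hLZ' : L Z' = Z' := by
    rw [hL]
    show C1 Z' ∪ C2 (Z'.filter (fun y => y ∉ E (C1 Z'))) = Z'
    rw [hC1Z']
    have hwnot : w ∉ Z'.filter (fun y => y ∉ E Z') := fun h => hw (Finset.mem_filter.1 h).1
    rw [hC2def, topChoice_pmKey2_none henc hxw (hxnot Z') hwnot]
    exact Finset.union_empty Z'
  -- L (insert w Z') = insert w Z'
  have hC1B : C1 (insert w Z') = Z' := by
    rw [hC1, Finset.insert_inter_of_notMem hw, Finset.inter_self]
  have hLB : L (insert w Z') = insert w Z' := by
    rw [hL]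
    show C1 (insert w Z') ∪ C2 ((insert w Z').filter (fun y => y ∉ E (C1 (insert w Z')))) =
      insert w Z'
    rw [hC1B]
    have hwW : w ∈ (insert w Z').filter (fun y => y ∉ E Z') :=
      Finset.mem_filter.2 ⟨Finset.mem_insert_self w Z', hwnotEZ'⟩
    rw [hC2def, topChoice_pmKey2_w henc hxw (hxnot _) hwW]
    rw [Finset.insert_eq, Finset.union_comm]
  -- path independence applied to (insert w Z, Z')
  have hunion : insert w Z ∪ Z' = insert w Z' := by
    rw [Finset.insert_union, Finset.union_eq_right.2 hZZ']
  have hZunion : Z ∪ Z' = Z' := Finset.union_eq_right.2 hZZ'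
  have := hpi (insert w Z) Z'
  rw [hunion, hLA, hLZ', hZunion, hLZ', hLB] at this
  exact hw (this ▸ Finset.mem_insert_self w Z')
end

section
/- Let X be a countably infinite set and let E be a contraction (E(Z) ⊆ Z for every finite Z ⊆ X). If the lexicographic composition L_E preserves path independence over the class C^res of responsive choice functions, then the set function I\E, defined by (I\E)(Z) = Z \ E(Z), is cardinal: for all finite Z, Z' ⊆ X with |Z| = |Z'| and every x ∈ Z ∩ Z', x ∈ Z \ E(Z) if and only if x ∈ Z' \ E(Z'). -/
/-! Common definitions: choice functions on a countably infinite set of items,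
lexicographic composition subject to an exclusion function, and the various
properties from the paper. Items form a type `X`; finite subsets of `X` are
`Finset X`; set functions are maps `Finset X → Set X`. -/

open scoped Classical

variable {X : Type*}

/-! Exchanging an element `a ≠ x` of a finite set for another element `b` does not change
whether `x` is excluded, and any two sets of equal size containing `x` are joined by such
exchanges. For one exchange write the two sets as `U \ {a}` and `U \ {b}`, and suppose that
`x ∉ E(U \ {b})` but `x ∈ E(U \ {a})`. Take a fresh item `y`, let `C₁` choose `|U| - 1`
elements of `U` ranking `a` last and let `C₂` choose one of `x ≻ y`. On `U ∪ {y}`, `C₁` takes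
`U \ {a}`, which excludes `x`, so `C₂` takes `y`; on `(U \ {b}) ∪ {y}` and on `{b}`, `x` stays
available and the composition only takes elements of `U`. This contradicts path independence. -/

open Finset

noncomputable def acceptable (r : LinearOrder (Option X)) (Y : Finset X) : Finset X :=
  Y.filter fun y => r.lt none (some y)

lemma filter_gt_subset_erase_acceptable (r : LinearOrder (Option X)) (Y : Finset X) (y : X) :
    Y.filter (fun z => r.lt none (some z) ∧ r.lt (some y) (some z)) ⊆
      (acceptable r Y).erase y := by
  let := r
  intro z hz
  rw [mem_filter] at hz
  exact mem_erase.2 ⟨by rintro rfl; exact lt_irrefl _ hz.2.2, mem_filter.2 ⟨hz.1, hz.2.1⟩⟩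

lemma topChoice_eq_acceptable (r : LinearOrder (Option X)) (q : ℕ) (Y : Finset X)
    (h : (acceptable r Y).card ≤ q) : topChoice r q Y = acceptable r Y := by
  refine filter_congr fun y hy => and_iff_left_of_imp fun hacc => ?_
  calc _ ≤ ((acceptable r Y).erase y).card :=
        card_le_card (filter_gt_subset_erase_acceptable r Y y)
    _ < (acceptable r Y).card := card_erase_lt_of_mem (mem_filter.2 ⟨hy, hacc⟩)
    _ ≤ q := h

lemma topChoice_eq_erase (r : LinearOrder (Option X)) (q : ℕ) (Y : Finset X) {a : X}
    (ha : a ∈ acceptable r Y)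
    (hlast : ∀ y ∈ acceptable r Y, y ≠ a → r.lt (some a) (some y))
    (hcard : (acceptable r Y).card = q + 1) :
    topChoice r q Y = (acceptable r Y).erase a := by
  let := r
  have hfilter : topChoice r q Y = (acceptable r Y).filter fun y =>
      (Y.filter fun z => r.lt none (some z) ∧ r.lt (some y) (some z)).card < q := by
    rw [acceptable, filter_filter]; rfl
  rw [hfilter, ← filter_ne']
  refine filter_congr fun y hy => ⟨fun hlt hya => ?_, fun hya => ?_⟩
  · subst hya
    have habove : (acceptable r Y).erase y ⊆
        Y.filter fun z => r.lt none (some z) ∧ r.lt (some y) (some z) := fun z hz => by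
      obtain ⟨hzy, hz⟩ := mem_erase.1 hz
      exact mem_filter.2 ⟨(mem_filter.1 hz).1, (mem_filter.1 hz).2, hlast z hz hzy⟩
    have := card_le_card habove
    rw [card_erase_of_mem hy] at this
    omega
  · have habove : (Y.filter fun z => r.lt none (some z) ∧ r.lt (some y) (some z)) ⊆
        ((acceptable r Y).erase y).erase a := fun z hz => by
      refine mem_erase.2 ⟨?_, filter_gt_subset_erase_acceptable r Y y hz⟩
      rintro rfl
      exact lt_asymm (hlast y hy hya) (mem_filter.1 hz).2.2
    have := card_le_card habove
    rw [card_erase_of_mem (mem_erase.2 ⟨Ne.symm hya, ha⟩), card_erase_of_mem hy] at this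
    have : 2 ≤ (acceptable r Y).card := one_lt_card.2 ⟨y, hy, a, ha, hya⟩
    omega

/-- `none` (the outside option) has rank 1, so exactly the members of `S` (ranks 2 and 3) are
acceptable, and `a` is the worst of them; equal ranks are ordered by a well-ordering. -/
noncomputable def lastRank (S : Finset X) (a : X) : Option X → ℕ :=
  fun o => o.elim 1 fun z => if z ∈ S then if z = a then 2 else 3 else 0

noncomputable abbrev rankingWithLast (S : Finset X) (a : X) : LinearOrder (Option X) :=
  letI : LinearOrder (Option X) := WellOrderingRel.isWellOrder.linearOrder
  LinearOrder.lift' (fun o => toLex (lastRank S a o, o))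
    fun _ _ h => (Prod.mk.inj (toLex.injective h)).2

lemma rankingWithLast_lt_iff (S : Finset X) (a : X) (u v : Option X) :
    (rankingWithLast S a).lt u v ↔
      lastRank S a u < lastRank S a v ∨
        lastRank S a u = lastRank S a v ∧ WellOrderingRel u v :=
  letI : LinearOrder (Option X) := WellOrderingRel.isWellOrder.linearOrder
  Prod.Lex.lt_iff

lemma acceptable_rankingWithLast (S : Finset X) (a : X) (Y : Finset X) :
    acceptable (rankingWithLast S a) Y = Y ∩ S := by
  rw [acceptable, ← filter_mem_eq_inter]
  refine filter_congr fun y _ => ?_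
  rw [rankingWithLast_lt_iff]
  simp only [lastRank, Option.elim]
  split_ifs <;> simp_all

lemma rankingWithLast_lt_of_ne (S : Finset X) {a y : X} (hy : y ∈ S) (hya : y ≠ a) :
    (rankingWithLast S a).lt (some a) (some y) := by
  rw [rankingWithLast_lt_iff]
  left
  simp only [lastRank, Option.elim, hy, hya, if_true, if_false]
  split_ifs <;> omega

lemma topChoice_rankingWithLast_of_card_le {S Y : Finset X} {q : ℕ} (a : X)
    (h : (Y ∩ S).card ≤ q) : topChoice (rankingWithLast S a) q Y = Y ∩ S := by
  rw [← acceptable_rankingWithLast S a] at h ⊢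
  exact topChoice_eq_acceptable _ q Y h

lemma topChoice_rankingWithLast_of_card_eq {S Y : Finset X} {q : ℕ} {a : X}
    (ha : a ∈ Y ∩ S) (h : (Y ∩ S).card = q + 1) :
    topChoice (rankingWithLast S a) q Y = (Y ∩ S).erase a := by
  rw [← acceptable_rankingWithLast S a] at ha h ⊢
  refine topChoice_eq_erase _ q Y ha (fun y hy hya => ?_) h
  rw [acceptable_rankingWithLast] at hy
  exact rankingWithLast_lt_of_ne S (mem_inter.1 hy).2 hya

lemma topChoice_rankingWithLast_pair_of_mem {x y : X} {Y : Finset X} (hxy : x ≠ y)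
    (hx : x ∈ Y) (hy : y ∈ Y) : topChoice (rankingWithLast {x, y} y) 1 Y = {x} := by
  have hpair : Y ∩ {x, y} = {x, y} :=
    inter_eq_right.2 (insert_subset_iff.2 ⟨hx, singleton_subset_iff.2 hy⟩)
  rw [topChoice_rankingWithLast_of_card_eq] <;> rw [hpair]
  · rw [pair_comm, erase_insert (notMem_singleton.2 hxy.symm)]
  · exact mem_insert_of_mem (mem_singleton_self y)
  · exact card_pair hxy

lemma topChoice_rankingWithLast_pair_of_notMem {x y : X} {Y : Finset X} (hx : x ∉ Y)
    (hy : y ∈ Y) : topChoice (rankingWithLast {x, y} y) 1 Y = {y} := by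
  have hpair : Y ∩ {x, y} = {y} := by
    rw [inter_insert_of_notMem hx, inter_singleton_of_mem hy]
  rw [topChoice_rankingWithLast_of_card_le y] <;> rw [hpair]
  exact (card_singleton y).le

lemma isChoice_topChoice (r : LinearOrder (Option X)) (q : ℕ) : IsChoice (topChoice r q) :=
  fun _ => filter_subset _ _

lemma responsive_topChoice (r : LinearOrder (Option X)) (q : ℕ) : Responsive (topChoice r q) :=
  ⟨r, q, fun _ => rfl⟩

lemma isChoice_lexComp (E : Finset X → Set X) {C1 C2 : Finset X → Finset X}
    (h1 : IsChoice C1) (h2 : IsChoice C2) : IsChoice (lexComp E C1 C2) :=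
  fun Y => union_subset (h1 Y) ((h2 _).trans (filter_subset _ Y))

def LexCompPreservesPI (E : Finset X → Set X) : Prop :=
  ∀ C1 C2 : Finset X → Finset X, IsChoice C1 → IsChoice C2 →
    Responsive C1 → Responsive C2 → PathIndependent (lexComp E C1 C2)

theorem notMem_exclusion_erase_of_notMem [Infinite X] {E : Finset X → Set X}
    (hcontr : ∀ Z : Finset X, E Z ⊆ Z) (hpres : LexCompPreservesPI E)
    {U : Finset X} {x a b : X} (hxU : x ∈ U) (haU : a ∈ U) (hbU : b ∈ U) (hxb : x ≠ b)
    (hxE : x ∉ E (U.erase b)) : x ∉ E (U.erase a) := by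
  intro hxE'
  obtain ⟨y, hyU⟩ := Infinite.exists_notMem_finset U
  have hyE : ∀ V ⊆ U, y ∉ E V := fun V hV hy => hyU (hV (hcontr V hy))
  have hyx : y ≠ x := by rintro rfl; exact hyU hxU
  set C1 := topChoice (rankingWithLast U a) (U.card - 1) with hC1
  set C2 := topChoice (rankingWithLast {x, y} y) 1 with hC2
  set L := lexComp E C1 C2
  have hL : IsChoice L := isChoice_lexComp E (isChoice_topChoice _ _) (isChoice_topChoice _ _)
  have hC1_erase_b : C1 (insert y (U.erase b)) = U.erase b := by
    rw [hC1, topChoice_rankingWithLast_of_card_le a] <;>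
      rw [insert_inter_of_notMem hyU, erase_inter, inter_self]
    rw [card_erase_of_mem hbU]
  have hC1_all : C1 (insert y U) = U.erase a := by
    rw [hC1, topChoice_rankingWithLast_of_card_eq] <;>
      rw [insert_inter_of_notMem hyU, inter_self]
    · exact haU
    · exact (Nat.sub_add_cancel (card_pos.2 ⟨x, hxU⟩)).symm
  have hC2_x : C2 ((insert y (U.erase b)).filter fun z => z ∉ E (U.erase b)) = {x} :=
    topChoice_rankingWithLast_pair_of_mem hyx.symm
      (mem_filter.2 ⟨mem_insert_of_mem (mem_erase.2 ⟨hxb, hxU⟩), hxE⟩)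
      (mem_filter.2 ⟨mem_insert_self y _, hyE _ (erase_subset b U)⟩)
  have hC2_y : C2 ((insert y U).filter fun z => z ∉ E (U.erase a)) = {y} :=
    topChoice_rankingWithLast_pair_of_notMem (fun hx => (mem_filter.1 hx).2 hxE')
      (mem_filter.2 ⟨mem_insert_self y U, hyE _ (erase_subset a U)⟩)
  have hyL : y ∈ L (insert y (U.erase b) ∪ {b}) := by
    rw [insert_union, erase_union_eq b U hbU]
    show y ∈ C1 _ ∪ C2 _
    rw [hC1_all, hC2_y]
    exact mem_union_right _ (mem_singleton_self y)
  have hLU : L (insert y (U.erase b)) ∪ L {b} ⊆ U := by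
    refine union_subset ?_ ((hL {b}).trans (singleton_subset_iff.2 hbU))
    show C1 _ ∪ C2 _ ⊆ U
    rw [hC1_erase_b, hC2_x]
    exact union_subset (erase_subset b U) (singleton_subset_iff.2 hxU)
  have hPI : L (insert y (U.erase b) ∪ {b}) = L (L (insert y (U.erase b)) ∪ L {b}) :=
    hpres C1 C2 (isChoice_topChoice _ _) (isChoice_topChoice _ _)
      (responsive_topChoice _ _) (responsive_topChoice _ _) (insert y (U.erase b)) {b}
  exact hyU (hLU (hL _ (hPI ▸ hyL)))

theorem mem_exclusion_erase_iff [Infinite X] {E : Finset X → Set X}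
    (hcontr : ∀ Z : Finset X, E Z ⊆ Z) (hpres : LexCompPreservesPI E)
    {U : Finset X} {x a b : X} (hxU : x ∈ U) (haU : a ∈ U) (hbU : b ∈ U) (hxa : x ≠ a)
    (hxb : x ≠ b) : x ∈ E (U.erase a) ↔ x ∈ E (U.erase b) :=
  not_iff_not.1 ⟨notMem_exclusion_erase_of_notMem hcontr hpres hxU hbU haU hxa,
    notMem_exclusion_erase_of_notMem hcontr hpres hxU haU hbU hxb⟩

theorem iff_of_card_eq_of_exchange {x : X} (p : Finset X → Prop)
    (hexch : ∀ (U : Finset X) (a b : X), x ∈ U → a ∈ U → b ∈ U → x ≠ a → x ≠ b →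
      (p (U.erase a) ↔ p (U.erase b)))
    {Z Z' : Finset X} (hcard : Z.card = Z'.card) (hx : x ∈ Z) (hx' : x ∈ Z') : p Z ↔ p Z' := by
  induction hk : (Z \ Z').card generalizing Z with
  | zero =>
    rw [card_eq_zero, sdiff_eq_empty_iff_subset] at hk
    rw [eq_of_subset_of_card_le hk hcard.ge]
  | succ k ih =>
    obtain ⟨a, ha⟩ := card_pos.1 (by omega : 0 < (Z \ Z').card)
    obtain ⟨b, hb⟩ := card_pos.1 (by rw [← card_sdiff_comm hcard]; omega : 0 < (Z' \ Z).card)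
    rw [mem_sdiff] at ha hb
    have hxa : x ≠ a := by rintro rfl; exact ha.2 hx'
    have hxb : x ≠ b := by rintro rfl; exact hb.2 hx
    have hswap := hexch (insert b Z) b a (mem_insert_of_mem hx) (mem_insert_self b Z)
      (mem_insert_of_mem ha.1) hxb hxa
    rw [erase_insert hb.2] at hswap
    refine hswap.trans (ih ?_ (mem_erase.2 ⟨hxa, mem_insert_of_mem hx⟩) ?_)
    · rw [card_erase_of_mem (mem_insert_of_mem ha.1), card_insert_of_notMem hb.2, hcard]
      rfl
    · rw [erase_sdiff_comm, insert_sdiff_of_mem _ hb.1, card_erase_of_mem (mem_sdiff.2 ha), hk]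
      rfl

theorem contraction_preserving_pi_reuse_cardinal_general
    {X : Type*} [Infinite X] (E : Finset X → Set X)
    (hcontr : ∀ Z : Finset X, E Z ⊆ (Z : Set X))
    (hpres : ∀ C1 C2 : Finset X → Finset X, IsChoice C1 → IsChoice C2 →
      Responsive C1 → Responsive C2 → PathIndependent (lexComp E C1 C2)) :
    ∀ Z Z' : Finset X, Z.card = Z'.card → ∀ x : X, x ∈ Z → x ∈ Z' →
      (x ∈ (Z : Set X) \ E Z ↔ x ∈ (Z' : Set X) \ E Z') := by
  intro Z Z' hcard x hxZ hxZ'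
  simp only [Set.mem_sdiff, mem_coe, hxZ, hxZ', true_and, not_iff_not]
  exact iff_of_card_eq_of_exchange (x ∈ E ·)
    (fun _ _ _ hxU haU hbU hxa hxb => mem_exclusion_erase_iff hcontr hpres hxU haU hbU hxa hxb)
    hcard hxZ hxZ'

/-- **Claim (reuse is cardinal).** If `E` is a contraction and `L_E` preserves
path independence over responsive choice functions, then `I \ E` is cardinal:
for finite `Z, Z'` with `|Z| = |Z'|` and any `x ∈ Z ∩ Z'`,
`x ∈ Z \ E(Z)` iff `x ∈ Z' \ E(Z')`. -/
theorem contraction_preserving_pi_reuse_cardinal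
    {X : Type*} [Countable X] [Infinite X] (E : Finset X → Set X)
    (hcontr : ∀ Z : Finset X, E Z ⊆ (Z : Set X))
    (hpres : ∀ C1 C2 : Finset X → Finset X, IsChoice C1 → IsChoice C2 →
      Responsive C1 → Responsive C2 → PathIndependent (lexComp E C1 C2)) :
    ∀ Z Z' : Finset X, Z.card = Z'.card → ∀ x : X, x ∈ Z → x ∈ Z' →
      (x ∈ (Z : Set X) \ E Z ↔ x ∈ (Z' : Set X) \ E Z') :=
  contraction_preserving_pi_reuse_cardinal_general E hcontr hpres
end

section
/- Let X be a countably infinite set and let E be any set function on finite subsets of X. If the lexicographic composition L_E preserves path independence over the class C^res of responsive choice functions, then (1) G_E is threshold-linear, and (2) R_E is cardinal-linear on Dom(R_E). -/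
/-! Common definitions: choice functions on a countably infinite set of items,
lexicographic composition subject to an exclusion function, and the various
properties from the paper. Items form a type `X`; finite subsets of `X` are
`Finset X`; set functions are maps `Finset X → Set X`. -/

open scoped Classical

variable {X : Type*}

/-!
Every step is one instance of path independence: for responsive `C1, C2` and
`L = L_E(C1, C2)`, `L (Y ∪ Y') ⊆ L Y ∪ L Y'`. Rankings that put a block `S` above a block `R`,
or that prefer one item to another with quota one, exhibit an item of `L (Y ∪ Y')` outside
`L Y ∪ L Y'` unless `E` is well behaved. Writing `K = E ∅` and `G = G_E`, this shows that
`G Z = Z ∪ K` whenever `G Z ≠ X`; that if `G Z = X` and `|Z| ≤ |W|`, every item outside `G W`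
lies in `Z`; and that if `x ∈ Z ∩ W` is excluded at `Z` but reused at `W`, where `|W| ≤ |Z|`,
every item outside `G Z` lies in `W`. Swapping a fresh item into `W` for a suitable one upgrades
the last two facts: a `Z` with `G Z = X ≠ Z ∪ K` forces `G W = X` whenever `|Z| ≤ |W|`, so the
threshold is the least size of such a `Z`; and an item reused at some `W` of the domain is reused
at every `Z` of the domain with `|W| ≤ |Z|`, so `T^n` collects the items reused at sets of size
at most `n` in the domain.
-/

open Finset

theorem topChoice_eq_filter_of_card_le (r : LinearOrder (Option X)) {q : ℕ} {Y : Finset X}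
    (h : #{y ∈ Y | r.lt none (some y)} ≤ q) :
    topChoice r q Y = {y ∈ Y | r.lt none (some y)} := by
  let := r
  refine filter_congr fun y hy => and_iff_left_of_imp fun hy' => h.trans_lt' (card_lt_card ?_)
  refine (ssubset_iff_of_subset (monotone_filter_right _ fun _ _ h => h.1)).2 ⟨y, ?_, ?_⟩
  · exact mem_filter.2 ⟨hy, hy'⟩
  · exact fun hy'' => lt_irrefl _ (mem_filter.1 hy'').2.2

theorem topChoice_card_eq_of_subset (r : LinearOrder (Option X)) {S Y : Finset X} (hSY : S ⊆ Y)
    (hS : ∀ s ∈ S, r.lt none (some s))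
    (htop : ∀ s ∈ S, ∀ z ∉ S, r.lt none (some z) → r.lt (some z) (some s)) :
    topChoice r #S Y = S := by
  let := r
  ext y
  simp only [topChoice, mem_filter]
  constructor
  · rintro ⟨hyY, hy, hcard⟩
    by_contra hyS
    exact hcard.not_ge <| card_le_card fun s hs =>
      mem_filter.2 ⟨hSY hs, hS s hs, htop s hs y hyS hy⟩
  · intro hyS
    refine ⟨hSY hyS, hS y hyS, card_lt_card ((ssubset_iff_of_subset ?_).2 ⟨y, hyS, ?_⟩)⟩
    · intro z hz
      obtain ⟨-, hz, hyz⟩ := mem_filter.1 hz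
      by_contra hzS
      exact lt_asymm hyz (htop y hyS z hzS hz)
    · exact fun hy => lt_irrefl _ (mem_filter.1 hy).2.2

section TieredChoice

noncomputable def tierRank (S R : Finset X) : Option X → ℤ
  | none => 0
  | some x => if x ∈ S then 2 else if x ∈ R then 1 else -1

@[reducible] noncomputable def tierOrder (S R : Finset X) : LinearOrder (Option X) :=
  letI : LinearOrder (Option X) := IsWellOrder.linearOrder WellOrderingRel
  LinearOrder.lift' (fun a => toLex (tierRank S R a, a))
    fun _ _ h => congrArg (fun p => (ofLex p).2) h

variable {S R : Finset X}

theorem tierOrder_lt_of_tierRank_lt {a b : Option X} (h : tierRank S R a < tierRank S R b) :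
    (tierOrder S R).lt a b := by
  let : LinearOrder (Option X) := IsWellOrder.linearOrder WellOrderingRel
  exact Prod.Lex.toLex_lt_toLex.2 (Or.inl h)

theorem tierOrder_none_lt_some {y : X} : (tierOrder S R).lt none (some y) ↔ y ∈ S ∪ R := by
  let := tierOrder S R
  constructor
  · intro h
    by_contra hy
    refine lt_asymm h (tierOrder_lt_of_tierRank_lt ?_)
    simp_all [tierRank]
  · intro hy
    apply tierOrder_lt_of_tierRank_lt
    simp only [tierRank]
    split_ifs <;> simp_all

noncomputable def tieredChoice (S R : Finset X) (q : ℕ) : Finset X → Finset X :=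
  topChoice (tierOrder S R) q

theorem responsive_tieredChoice (q : ℕ) : Responsive (tieredChoice S R q) :=
  ⟨_, _, fun _ => rfl⟩

theorem filter_tierOrder_none_lt (Y : Finset X) :
    {y ∈ Y | (tierOrder S R).lt none (some y)} = Y ∩ (S ∪ R) := by
  simp only [tierOrder_none_lt_some, filter_mem_eq_inter]

theorem tieredChoice_eq_inter {q : ℕ} {Y : Finset X} (h : #(Y ∩ (S ∪ R)) ≤ q) :
    tieredChoice S R q Y = Y ∩ (S ∪ R) := by
  rw [← filter_tierOrder_none_lt] at h ⊢
  exact topChoice_eq_filter_of_card_le _ h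

theorem tieredChoice_card_eq_of_subset {Y : Finset X} (h : S ⊆ Y) : tieredChoice S R #S Y = S := by
  refine topChoice_card_eq_of_subset _ h
    (fun s hs => tierOrder_none_lt_some.2 (mem_union_left _ hs))
    fun s hs z hz hzacc => tierOrder_lt_of_tierRank_lt ?_
  have hzR : z ∈ R := by simpa [hz] using tierOrder_none_lt_some.1 hzacc
  simp [tierRank, hs, hz, hzR]

noncomputable def acceptChoice (S : Finset X) : Finset X → Finset X :=
  tieredChoice S ∅ #S

theorem responsive_acceptChoice (S : Finset X) : Responsive (acceptChoice S) :=
  responsive_tieredChoice _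

@[simp]
theorem acceptChoice_apply (S Y : Finset X) : acceptChoice S Y = Y ∩ S := by
  rw [acceptChoice, tieredChoice_eq_inter] <;> simp [card_le_card, inter_subset_right]

noncomputable def preferChoice (a b : X) : Finset X → Finset X :=
  tieredChoice {a} {b} 1

theorem responsive_preferChoice (a b : X) : Responsive (preferChoice a b) :=
  responsive_tieredChoice _

theorem preferChoice_of_mem {a b : X} {Y : Finset X} (h : a ∈ Y) : preferChoice a b Y = {a} := by
  rw [preferChoice, ← card_singleton a]
  exact tieredChoice_card_eq_of_subset (singleton_subset_iff.2 h)

theorem preferChoice_of_notMem {a b : X} {Y : Finset X} (h : a ∉ Y) :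
    preferChoice a b Y = Y ∩ {b} := by
  have hY : Y ∩ ({a} ∪ {b}) = Y ∩ {b} := by ext; aesop
  rw [preferChoice, tieredChoice_eq_inter] <;> rw [hY]
  exact (card_le_card inter_subset_right).trans_eq (card_singleton b)

end TieredChoice

theorem Responsive.isChoice {C : Finset X → Finset X} (hC : Responsive C) : IsChoice C := by
  obtain ⟨r, q, hC⟩ := hC
  exact fun Y => (hC Y).trans_subset (filter_subset _ _)

theorem IsChoice.lexComp {C1 C2 : Finset X → Finset X} (h1 : IsChoice C1) (h2 : IsChoice C2)
    (E : Finset X → Set X) : IsChoice (lexComp E C1 C2) :=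
  fun Y => union_subset (h1 Y) ((h2 _).trans (filter_subset _ _))

theorem PathIndependent.mem_union_of_mem {C : Finset X → Finset X} (hC : PathIndependent C)
    (hch : IsChoice C) {Y Y' : Finset X} {u : X} (hu : u ∈ C (Y ∪ Y')) : u ∈ C Y ∪ C Y' :=
  hch _ (hC Y Y' ▸ hu)

def PreservesPIOnResponsive (E : Finset X → Set X) : Prop :=
  ∀ C1 C2 : Finset X → Finset X, IsChoice C1 → IsChoice C2 →
    Responsive C1 → Responsive C2 → PathIndependent (lexComp E C1 C2)

def dilation (E : Finset X → Set X) (Z : Finset X) : Set X := E Z ∪ Z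

@[simp]
theorem mem_dilation {E : Finset X → Set X} {Z : Finset X} {x : X} :
    x ∈ dilation E Z ↔ x ∈ E Z ∨ x ∈ Z := Iff.rfl

namespace PreservesPIOnResponsive

variable {E : Finset X → Set X} (hE : PreservesPIOnResponsive E)
include hE

theorem mem_union_of_mem_lexComp {C1 C2 : Finset X → Finset X} (h1 : Responsive C1)
    (h2 : Responsive C2) {Y Y' A B : Finset X} (hY : lexComp E C1 C2 Y ⊆ A)
    (hY' : lexComp E C1 C2 Y' ⊆ B) {u : X} (hu : u ∈ lexComp E C1 C2 (Y ∪ Y')) : u ∈ A ∪ B :=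
  union_subset_union hY hY' <|
    (hE _ _ h1.isChoice h2.isChoice h1 h2).mem_union_of_mem (h1.isChoice.lexComp h2.isChoice E) hu

theorem exclusion_empty_subset_dilation (Z : Finset X) : E ∅ ⊆ dilation E Z := by
  intro k hk
  by_contra hkZ
  simp only [mem_dilation, not_or] at hkZ
  have h1 := responsive_acceptChoice Z
  have h2 := responsive_acceptChoice {k}
  have hk' : lexComp E (acceptChoice Z) (acceptChoice {k}) {k} ⊆ ∅ := by
    simp [lexComp, hkZ.2, hk]
  have hZk : k ∈ lexComp E (acceptChoice Z) (acceptChoice {k}) (Z ∪ {k}) := by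
    simp [lexComp, hkZ]
  simpa [hkZ.2] using
    hE.mem_union_of_mem_lexComp h1 h2 (h1.isChoice.lexComp h2.isChoice E Z) hk' hZk

theorem dilation_eq_union_of_ne_univ {Z : Finset X} (hZ : dilation E Z ≠ Set.univ) :
    dilation E Z = ↑Z ∪ E ∅ := by
  refine subset_antisymm (fun e he => ?_)
    (Set.union_subset (fun _ => Or.inr) (hE.exclusion_empty_subset_dilation Z))
  obtain ⟨x, hx⟩ := (Set.ne_univ_iff_exists_notMem _).1 hZ
  by_contra heK
  simp only [mem_dilation, Set.mem_union, Finset.mem_coe, not_or] at he hx heK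
  have heZ : e ∈ E Z := he.resolve_right heK.1
  have hex : e ≠ x := by rintro rfl; exact hx.1 heZ
  have h1 := responsive_acceptChoice Z
  have h2 := responsive_preferChoice e x
  have hex' : lexComp E (acceptChoice Z) (preferChoice e x) {e, x} ⊆ {e} := by
    have : {e, x} ∩ Z = ∅ := by simp [hx.2, heK.1]
    simp [lexComp, this, preferChoice_of_mem, heK.2]
  have hx' : x ∈ lexComp E (acceptChoice Z) (preferChoice e x) (Z ∪ {e, x}) := by
    rw [lexComp, acceptChoice_apply, union_inter_cancel_left, preferChoice_of_notMem]
    · simp [hx]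
    · simp [heZ]
  simpa [hx.2, hex.symm] using
    hE.mem_union_of_mem_lexComp h1 h2 (h1.isChoice.lexComp h2.isChoice E Z) hex' hx'

theorem mem_of_dilation_eq_univ {Z W : Finset X} (hZ : dilation E Z = Set.univ)
    (hcard : #Z ≤ #W) {v : X} (hv : v ∉ dilation E W) : v ∈ Z := by
  by_contra hvZ
  simp only [mem_dilation, not_or] at hv
  have hvEZ : v ∈ E Z := ((mem_dilation).1 (hZ ▸ Set.mem_univ v)).resolve_right hvZ
  have h1 := responsive_tieredChoice (S := W) (R := Z) #W
  have h2 := responsive_acceptChoice {v}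
  have hY : lexComp E (tieredChoice W Z #W) (acceptChoice {v}) (insert v Z) ⊆ Z := by
    have hC1 : insert v Z ∩ (W ∪ Z) = Z := by ext; aesop
    rw [lexComp, tieredChoice_eq_inter (by rwa [hC1]), hC1]
    simp [hvEZ]
  have hv' : v ∈ lexComp E (tieredChoice W Z #W) (acceptChoice {v}) (insert v Z ∪ W) := by
    rw [lexComp, tieredChoice_card_eq_of_subset subset_union_right]
    simp [hv]
  simpa [hvZ, hv.2] using
    hE.mem_union_of_mem_lexComp h1 h2 hY (h1.isChoice.lexComp h2.isChoice E W) hv'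

theorem dilation_eq_univ_of_card_le [Infinite X] {Z W : Finset X}
    (hZ : dilation E Z = Set.univ) (hZK : ↑Z ∪ E ∅ ≠ Set.univ) (hcard : #Z ≤ #W) :
    dilation E W = Set.univ := by
  by_contra hW
  obtain ⟨x, hx⟩ := (Set.ne_univ_iff_exists_notMem _).1 hW
  obtain ⟨y, hy⟩ := (Set.ne_univ_iff_exists_notMem _).1 hZK
  simp only [Set.mem_union, Finset.mem_coe, not_or] at hy
  have hyW : y ∈ W := by
    by_contra hyW
    refine hy.1 (hE.mem_of_dilation_eq_univ hZ hcard ?_)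
    simp [hE.dilation_eq_union_of_ne_univ hW, hyW, hy.2]
  obtain ⟨e, he⟩ := Infinite.exists_notMem_finset (insert x W)
  rw [mem_insert, not_or] at he
  have hT : #(insert e (W.erase y)) = #W := by
    rw [card_insert_of_notMem (fun h => he.2 (mem_of_mem_erase h)), card_erase_add_one hyW]
  by_cases hTfull : dilation E (insert e (W.erase y)) = Set.univ
  · have hxT := hE.mem_of_dilation_eq_univ hTfull hT.le hx
    simp only [mem_dilation, not_or] at hx
    simp [Ne.symm he.1, hx.2] at hxT
  · refine hy.1 (hE.mem_of_dilation_eq_univ hZ (hcard.trans hT.ge) ?_)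
    have hye : y ≠ e := by rintro rfl; exact he.2 hyW
    simp [hE.dilation_eq_union_of_ne_univ hTfull, hye, hy.2]

theorem mem_of_notMem_dilation_of_reused {Z W : Finset X} (hcard : #W ≤ #Z) {x : X}
    (hxW : x ∈ W) (hxEZ : x ∈ E Z) (hxEW : x ∉ E W) {u : X}
    (hu : u ∉ dilation E Z) : u ∈ W := by
  by_contra huW
  simp only [mem_dilation, not_or] at hu
  have h1 := responsive_tieredChoice (S := Z) (R := W) #Z
  have h2 := responsive_preferChoice x u
  have hY' : lexComp E (tieredChoice Z W #Z) (preferChoice x u) (insert u W) ⊆ W := by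
    have hC1 : insert u W ∩ (Z ∪ W) = W := by ext; aesop
    rw [lexComp, tieredChoice_eq_inter (by rwa [hC1]), hC1, preferChoice_of_mem]
    · exact union_subset subset_rfl (singleton_subset_iff.2 hxW)
    · simp [hxW, hxEW]
  have hu' : u ∈ lexComp E (tieredChoice Z W #Z) (preferChoice x u) (Z \ W ∪ insert u W) := by
    have hZ : Z ⊆ Z \ W ∪ insert u W := fun z hz => by by_cases z ∈ W <;> simp_all
    rw [lexComp, tieredChoice_card_eq_of_subset hZ, preferChoice_of_notMem]
    · simp [hu.1]
    · simp [hxEZ]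
  simpa [hu.2, huW] using
    hE.mem_union_of_mem_lexComp h1 h2 (h1.isChoice.lexComp h2.isChoice E (Z \ W)) hY' hu'

end PreservesPIOnResponsive

theorem thresholdLinear_of_card_le {D : Finset X → Set X}
    (h : ∀ Z W : Finset X, D Z ≠ ↑Z ∪ D ∅ → #Z ≤ #W → D W = Set.univ) : ThresholdLinear D := by
  refine ⟨⨅ (Z : Finset X) (_ : D Z ≠ ↑Z ∪ D ∅), (#Z : ℕ∞), fun W => ⟨fun hW => ?_, fun hW => ?_⟩⟩
  · by_contra hne
    exact hW.not_ge (iInf₂_le W hne)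
  · by_contra hne
    refine hW ((Nat.cast_lt.2 (Nat.lt_succ_self #W)).trans_le (le_iInf₂ fun Z hZ => ?_))
    exact Nat.cast_le.2 (not_le.1 fun hle => hne (h Z W hZ hle))

def reuseUpTo (E : Finset X → Set X) (n : ℕ) : Set X :=
  {x | ∃ W : Finset X, #W ≤ n ∧ dilation E W ≠ Set.univ ∧ x ∈ W ∧ x ∉ E W}

theorem reuseUpTo_zero (E : Finset X → Set X) : reuseUpTo E 0 = ∅ :=
  Set.eq_empty_of_forall_notMem fun _ ⟨W, hW, _, hxW, _⟩ => by
    simp [card_eq_zero.1 (Nat.le_zero.1 hW)] at hxW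

theorem monotone_reuseUpTo (E : Finset X → Set X) : Monotone (reuseUpTo E) :=
  fun _ _ hmn _ ⟨W, hW, hWE⟩ => ⟨W, hW.trans hmn, hWE⟩

namespace PreservesPIOnResponsive

variable {E : Finset X → Set X} (hE : PreservesPIOnResponsive E)
include hE

theorem thresholdLinear_dilation [Infinite X] : ThresholdLinear (dilation E) := by
  refine thresholdLinear_of_card_le fun Z W hZ hcard => ?_
  have hK : dilation E ∅ = E ∅ := by simp [dilation]
  rw [hK] at hZ
  have hfull : dilation E Z = Set.univ := by
    by_contra h
    exact hZ (hE.dilation_eq_union_of_ne_univ h)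
  exact hE.dilation_eq_univ_of_card_le hfull (fun h => hZ (hfull.trans h.symm)) hcard

theorem notMem_exclusion_of_reused [Infinite X] {Z W : Finset X} (hZ : dilation E Z ≠ Set.univ)
    (hW : dilation E W ≠ Set.univ) (hcard : #W ≤ #Z) {x : X} (hxZ : x ∈ Z) (hxW : x ∈ W)
    (hxEW : x ∉ E W) : x ∉ E Z := by
  intro hxEZ
  obtain ⟨y, hy⟩ := (Set.ne_univ_iff_exists_notMem _).1 hZ
  have hyW := hE.mem_of_notMem_dilation_of_reused hcard hxW hxEZ hxEW hy
  have hyK : y ∉ E ∅ := fun h => hy (hE.exclusion_empty_subset_dilation Z h)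
  obtain ⟨u, hu⟩ := (Set.ne_univ_iff_exists_notMem _).1 hW
  have huK : u ∉ E ∅ := fun h => hu (hE.exclusion_empty_subset_dilation W h)
  obtain ⟨e, he⟩ := Infinite.exists_notMem_finset (insert u W)
  rw [mem_insert, not_or] at he
  set W' := insert e (W.erase y)
  have hW'card : #W' = #W := by
    rw [card_insert_of_notMem (fun h => he.2 (mem_of_mem_erase h)), card_erase_add_one hyW]
  have hyW' : y ∉ W' := by
    have hye : y ≠ e := by rintro rfl; exact he.2 hyW
    simp [W', hye]
  have hW' : dilation E W' ≠ Set.univ := fun hfull => hZ <|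
    hE.dilation_eq_univ_of_card_le hfull
      ((Set.ne_univ_iff_exists_notMem _).2 ⟨y, by simp [hyW', hyK]⟩) (hW'card.trans_le hcard)
  have hxW' : x ∈ W' := by
    have hxy : x ≠ y := by rintro rfl; exact hy (Or.inr hxZ)
    simp [W', hxy, hxW]
  by_cases hxEW' : x ∈ E W'
  · refine hu (Or.inr (hE.mem_of_notMem_dilation_of_reused hW'card.ge hxW hxEW' hxEW ?_))
    have huW : u ∉ W := fun h => hu (Or.inr h)
    simp [hE.dilation_eq_union_of_ne_univ hW', W', Ne.symm he.1, huW, huK]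
  · exact hyW' (hE.mem_of_notMem_dilation_of_reused (hW'card.trans_le hcard) hxW' hxEZ hxEW' hy)

theorem diff_eq_inter_reuseUpTo [Infinite X] {Z : Finset X} (hZ : dilation E Z ≠ Set.univ) :
    ↑Z \ E Z = ↑Z ∩ reuseUpTo E #Z := by
  ext x
  constructor
  · rintro ⟨hxZ, hxE⟩
    exact ⟨hxZ, Z, le_rfl, hZ, hxZ, hxE⟩
  · rintro ⟨hxZ, W, hcard, hW, hxW, hxEW⟩
    exact ⟨hxZ, hE.notMem_exclusion_of_reused hZ hW hcard hxZ hxW hxEW⟩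

end PreservesPIOnResponsive

theorem preserving_pi_necessary_conditions_general
    {X : Type*} [Infinite X] (E : Finset X → Set X)
    (hpres : ∀ C1 C2 : Finset X → Finset X, IsChoice C1 → IsChoice C2 →
      Responsive C1 → Responsive C2 → PathIndependent (lexComp E C1 C2)) :
    ThresholdLinear (fun Z : Finset X => E Z ∪ (Z : Set X)) ∧
      ∃ T : ℕ → Set X, T 0 = ∅ ∧ Monotone T ∧
        ∀ Z : Finset X, E Z ∪ (Z : Set X) ≠ Set.univ →
          (Z : Set X) \ E Z = (Z : Set X) ∩ T Z.card :=
  have hE : PreservesPIOnResponsive E := hpres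
  ⟨hE.thresholdLinear_dilation, reuseUpTo E, reuseUpTo_zero E, monotone_reuseUpTo E,
    fun _ hZ => hE.diff_eq_inter_reuseUpTo hZ⟩

/-- **Claim (general necessary conditions).** If `L_E` preserves path
independence over responsive choice functions, then (1) the gross exclusion
`G_E : Z ↦ E(Z) ∪ Z` is threshold-linear, and (2) the reuse `R_E : Z ↦ Z \ E(Z)`
is cardinal-linear on `Dom(R_E) = {Z : G_E(Z) ≠ X}`. -/
theorem preserving_pi_necessary_conditions
    {X : Type*} [Countable X] [Infinite X] (E : Finset X → Set X)
    (hpres : ∀ C1 C2 : Finset X → Finset X, IsChoice C1 → IsChoice C2 →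
      Responsive C1 → Responsive C2 → PathIndependent (lexComp E C1 C2)) :
    ThresholdLinear (fun Z : Finset X => E Z ∪ (Z : Set X)) ∧
      ∃ T : ℕ → Set X, T 0 = ∅ ∧ Monotone T ∧
        ∀ Z : Finset X, E Z ∪ (Z : Set X) ≠ Set.univ →
          (Z : Set X) \ E Z = (Z : Set X) ∩ T Z.card :=
  preserving_pi_necessary_conditions_general E hpres
end
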